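/- Let A = {π, φ} with π < φ and augment to A' = {π, η, φ} with π < η < φ. Then the induced order ≤_η on {π, φ}* coincides with the chronological order: v ≤_η w if and only if w may be obtained from v by deleting some occurrences of π and inserting some occurrences of φ. -/

import Mathlib

/-!
Read a componentwise comparison `v' ≤ w'` of `η`-extensions column by column: a column
`(π, η)` deletes a `π`, a column `(η, φ)` inserts a `φ`, a column `(π, φ)` does both, and the
remaining columns are constant. Conversely, the induced relation is closed under both moves:
deleting a `π` from `w` amounts to replacing that letter of `w'` by `η`, which keeps it above
its partner in `v'`, and inserting a `φ` amounts to adding a column `(η, φ)`.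
-/

/-- Erase all occurrences of the letter `a` from a word. -/
def aErase {α : Type*} [DecidableEq α] (a : α) (w : List α) : List α :=
  w.filter (· ≠ a)

/-- `w'` is an `a`-extension of `w`: it is obtained by inserting copies of `a` into `w`,
equivalently erasing all occurrences of `a` from `w'` yields `w`. -/
def IsAExt {α : Type*} [DecidableEq α] (a : α) (w w' : List α) : Prop :=
  aErase a w' = w

/-- The induced relation `≤ₐ` on words, relative to a relation `r` on letters:
`v ≤ₐ w` iff there are `a`-extensions of `v` and `w` of equal length that are
related componentwise (componentwise relation of equal-length lists is `List.Forall₂ r`). -/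
def LeExt {α : Type*} [DecidableEq α] (r : α → α → Prop) (a : α) (v w : List α) : Prop :=
  ∃ v' w', IsAExt a v v' ∧ IsAExt a w w' ∧ List.Forall₂ r v' w'

/-- One-step chronological moves on words over `{π, φ}` (modelled as
`0, 2 : Fin 3`, with the auxiliary letter `η = 1`): delete a `π` or insert a `φ`. -/
inductive ChronStep : List (Fin 3) → List (Fin 3) → Prop
  | delPi (l r : List (Fin 3)) : ChronStep (l ++ [0] ++ r) (l ++ r)
  | insPhi (l r : List (Fin 3)) : ChronStep (l ++ r) (l ++ [2] ++ r)

lemma List.exists_append_of_forall₂_append {α β : Type*} {R : α → β → Prop} {l : List α}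
    {l₁ l₂ : List β} (h : List.Forall₂ R l (l₁ ++ l₂)) :
    ∃ a b, l = a ++ b ∧ List.Forall₂ R a l₁ ∧ List.Forall₂ R b l₂ :=
  ⟨l.take l₁.length, l.drop l₁.length, (List.take_append_drop _ l).symm,
    List.forall₂_take_append l l₁ l₂ h, List.forall₂_drop_append l l₁ l₂ h⟩

section Erase

variable {α : Type*} [DecidableEq α]

lemma aErase_append (a : α) (l₁ l₂ : List α) :
    aErase a (l₁ ++ l₂) = aErase a l₁ ++ aErase a l₂ :=
  List.filter_append l₁ l₂

@[simp]
lemma aErase_cons_self (a : α) (l : List α) : aErase a (a :: l) = aErase a l := by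
  simp [aErase]

lemma aErase_cons_of_ne {a x : α} (h : x ≠ a) (l : List α) :
    aErase a (x :: l) = x :: aErase a l := by
  simp [aErase, h]

lemma aErase_eq_self {a : α} {w : List α} (h : a ∉ w) : aErase a w = w :=
  List.filter_eq_self.mpr fun x hx => by
    simpa using fun hxa : x = a => h (hxa ▸ hx)

lemma exists_eq_append_cons_of_aErase_eq {a x : α} {w' l r : List α}
    (h : aErase a w' = l ++ x :: r) :
    ∃ P Q, w' = P ++ x :: Q ∧ aErase a P = l ∧ aErase a Q = r := by
  obtain ⟨P, Q₀, rfl, hP, hQ₀⟩ := List.filter_eq_append_iff.mp h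
  obtain ⟨M, Q, rfl, hM, -, hQ⟩ := List.filter_eq_cons_iff.mp hQ₀
  have hM' : aErase a M = [] := List.filter_eq_nil_iff.mpr hM
  exact ⟨P ++ M, Q, by simp, by rw [aErase_append, hM', List.append_nil]; exact hP, hQ⟩

variable {r : α → α → Prop} {a : α} {v : List α}

lemma LeExt.refl_of_not_mem (hr : ∀ x, r x x) (hv : a ∉ v) : LeExt r a v v :=
  ⟨v, v, aErase_eq_self hv, aErase_eq_self hv, List.forall₂_same.mpr fun x _ => hr x⟩

lemma LeExt.of_append_cons {x : α} {l t : List α} (hx : ∀ y, r y x → r y a)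
    (h : LeExt r a v (l ++ x :: t)) : LeExt r a v (l ++ t) := by
  obtain ⟨v', w', hv', hw', hf⟩ := h
  obtain ⟨P, Q, rfl, hP, hQ⟩ := exists_eq_append_cons_of_aErase_eq hw'
  obtain ⟨A, B₀, rfl, hA, hB₀⟩ := List.exists_append_of_forall₂_append hf
  obtain _ | ⟨hy, hB⟩ := hB₀
  refine ⟨_, P ++ a :: Q, hv', ?_, List.rel_append hA (.cons (hx _ hy) hB)⟩
  rw [IsAExt, aErase_append, aErase_cons_self, hP, hQ]

lemma LeExt.append_cons {x : α} {l t : List α} (hax : r a x) (hxa : x ≠ a)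
    (h : LeExt r a v (l ++ t)) : LeExt r a v (l ++ x :: t) := by
  obtain ⟨v', w', hv', hw', hf⟩ := h
  obtain ⟨P, Q, rfl, hP, hQ⟩ := List.filter_eq_append_iff.mp hw'
  obtain ⟨A, B, rfl, hA, hB⟩ := List.exists_append_of_forall₂_append hf
  refine ⟨A ++ a :: B, P ++ x :: Q, ?_, ?_, List.rel_append hA (.cons hax hB)⟩
  · rwa [IsAExt, aErase_append, aErase_cons_self, ← aErase_append]
  · rw [IsAExt, aErase_append, aErase_cons_of_ne hxa]
    exact congrArg₂ _ hP (congrArg _ hQ)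

end Erase

namespace ChronStep

lemma append_left (u : List (Fin 3)) {s t : List (Fin 3)} (h : ChronStep s t) :
    ChronStep (u ++ s) (u ++ t) := by
  cases h with
  | delPi l r => simpa only [List.append_assoc] using delPi (u ++ l) r
  | insPhi l r => simpa only [List.append_assoc] using insPhi (u ++ l) r

lemma append_right (u : List (Fin 3)) {s t : List (Fin 3)} (h : ChronStep s t) :
    ChronStep (s ++ u) (t ++ u) := by
  cases h with
  | delPi l r => simpa only [List.append_assoc] using delPi l (r ++ u)
  | insPhi l r => simpa only [List.append_assoc] using insPhi l (r ++ u)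

end ChronStep

lemma reflTransGen_chronStep_append {s t s' t' : List (Fin 3)}
    (h : Relation.ReflTransGen ChronStep s t) (h' : Relation.ReflTransGen ChronStep s' t') :
    Relation.ReflTransGen ChronStep (s ++ s') (t ++ t') :=
  (h.lift (· ++ s') fun _ _ => ChronStep.append_right s').trans
    (h'.lift (t ++ ·) fun _ _ => ChronStep.append_left t)

lemma reflTransGen_chronStep_aErase_singleton {a b : Fin 3} (hab : a ≤ b) :
    Relation.ReflTransGen ChronStep (aErase 1 [a]) (aErase 1 [b]) := by
  have del : Relation.ReflTransGen ChronStep [0] [] := .single (.delPi [] [])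
  have ins : Relation.ReflTransGen ChronStep [] [2] := .single (.insPhi [] [])
  fin_cases a <;> fin_cases b
  all_goals first
    | exact absurd hab (by decide)
    | exact .refl
    | exact del
    | exact ins
    | exact del.trans ins

lemma reflTransGen_chronStep_aErase_of_forall₂ {v' w' : List (Fin 3)}
    (h : List.Forall₂ (· ≤ ·) v' w') :
    Relation.ReflTransGen ChronStep (aErase 1 v') (aErase 1 w') := by
  induction h with
  | nil => exact .refl
  | @cons a b l₁ l₂ hab _ ih =>
    rw [← List.singleton_append, aErase_append, ← List.singleton_append (l := l₂), aErase_append]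
    exact reflTransGen_chronStep_append (reflTransGen_chronStep_aErase_singleton hab) ih

lemma leExt_of_reflTransGen_chronStep {v w : List (Fin 3)} (hv : (1 : Fin 3) ∉ v)
    (h : Relation.ReflTransGen ChronStep v w) : LeExt (· ≤ ·) (1 : Fin 3) v w := by
  induction h with
  | refl => exact .refl_of_not_mem le_refl hv
  | tail _ step ih =>
    cases step with
    | delPi l t =>
      rw [List.append_assoc] at ih
      exact ih.of_append_cons fun y hy => hy.trans (by decide)
    | insPhi l t =>
      rw [List.append_assoc]
      exact ih.append_cons (by decide) (by decide)

theorem stmt_14_general (v w : List (Fin 3)) (hv : (1 : Fin 3) ∉ v) :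
    LeExt (· ≤ ·) (1 : Fin 3) v w ↔ Relation.ReflTransGen ChronStep v w := by
  constructor
  · rintro ⟨v', w', rfl, rfl, hf⟩
    exact reflTransGen_chronStep_aErase_of_forall₂ hf
  · exact leExt_of_reflTransGen_chronStep hv

/-- For `π < η < φ` (the chain `0 < 1 < 2` in `Fin 3`), the order induced by dropping
`η` coincides with the chronological order: the reflexive-transitive closure of
deleting `π`'s and inserting `φ`'s. -/
theorem stmt_14 (v w : List (Fin 3)) (hv : (1 : Fin 3) ∉ v) (hw : (1 : Fin 3) ∉ w) :
    LeExt (· ≤ ·) (1 : Fin 3) v w ↔ Relation.ReflTransGen ChronStep v w :=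
  stmt_14_general v w hv
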